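/- Let A ∈ ℝ^{n×n}, B ∈ ℝ^{n×m}, B₁ ∈ ℝ^{n×p}, with (A,B) a controllable pair and the column space of B contained in the column space of B₁. Let Σ be a symmetric positive definite n×n matrix and suppose X ∈ ℝ^{n×m} satisfies AΣ + ΣAᵀ + B₁B₁ᵀ + BXᵀ + XBᵀ = 0. Then, setting K := −XᵀΣ⁻¹, the matrix A − BK is Hurwitz and (A − BK)Σ + Σ(A − BK)ᵀ + B₁B₁ᵀ = 0. -/

import Mathlib

/-!
Write `F = A - BK`. Expanding `K`, the equation for `X` is exactly the Lyapunov equation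
`FΣ + ΣFᵀ + B₁B₁ᵀ = 0`. If `u F = μ u` for a nonzero complex row vector `u`, sandwiching the
Lyapunov equation between `u` and `ū` gives `2 Re μ · (u Σ ūᵀ) + |u B₁|² = 0`, with `u Σ ūᵀ ≥ 0`.
So `Re μ ≥ 0` forces `u B₁ = 0`, hence `u B = 0` as `range B ⊆ range B₁`, and then `u A = μ u`.
But then `u` annihilates every `AᵏB`, which contradicts controllability (the
Popov–Belevitch–Hautus test).
-/

open Matrix

/-- The controllability matrix `[B, AB, A²B, …, A^{n−1}B]` (columns indexed by `Fin n × Fin m`). -/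
def ctrbMatrix {n m : ℕ} (A : Matrix (Fin n) (Fin n) ℝ) (B : Matrix (Fin n) (Fin m) ℝ) :
    Matrix (Fin n) (Fin n × Fin m) ℝ :=
  Matrix.of fun i p => ((A ^ (p.1 : ℕ)) * B) i p.2

/-- `(A,B)` is a controllable pair iff the controllability matrix has rank `n`. -/
def IsControllablePair {n m : ℕ} (A : Matrix (Fin n) (Fin n) ℝ)
    (B : Matrix (Fin n) (Fin m) ℝ) : Prop :=
  (ctrbMatrix A B).rank = n

/-- A real square matrix is Hurwitz iff all its (complex) eigenvalues have negative real part. -/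
def IsHurwitz {n : ℕ} (F : Matrix (Fin n) (Fin n) ℝ) : Prop :=
  ∀ μ ∈ spectrum ℂ (F.map (algebraMap ℝ ℂ)), μ.re < 0

open scoped ComplexOrder

namespace Matrix

theorem exists_vecMul_eq_smul_of_mem_spectrum {K ι : Type*} [Field K] [Fintype ι] [DecidableEq ι]
    {M : Matrix ι ι K} {μ : K} (h : μ ∈ spectrum K M) : ∃ v, v ≠ 0 ∧ v ᵥ* M = μ • v := by
  rw [mem_spectrum_iff_isRoot_charpoly, ← charpoly_transpose, ← mem_spectrum_iff_isRoot_charpoly,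
    ← spectrum_toLin', ← Module.End.hasEigenvalue_iff_mem_spectrum] at h
  obtain ⟨v, hv⟩ := h.exists_hasEigenvector
  exact ⟨v, hv.2, by rw [← mulVec_transpose]; exact Module.End.mem_eigenspace_iff.1 hv.1⟩

theorem exists_mul_eq_one_of_rank_eq_card {K ι κ : Type*} [Field K] [Fintype ι] [DecidableEq ι]
    [Fintype κ] {C : Matrix ι κ K} (h : C.rank = Fintype.card ι) :
    ∃ R : Matrix κ ι K, C * R = 1 := by
  have hC : LinearMap.range C.mulVecLin = ⊤ :=
    Submodule.eq_top_of_finrank_eq (by rw [← rank, h, Module.finrank_fintype_fun_eq_card])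
  exact mulVec_surjective_iff_exists_right_inverse.1 (LinearMap.range_eq_top.1 hC)

theorem exists_mul_eq_of_range_mulVec_subset {R ι κ μ : Type*} [Semiring R] [Fintype κ]
    [Fintype μ] [DecidableEq κ] {B : Matrix ι κ R} {B₁ : Matrix ι μ R}
    (h : Set.range B.mulVec ⊆ Set.range B₁.mulVec) : ∃ C : Matrix μ κ R, B₁ * C = B := by
  choose c hc using fun j : κ => h ⟨Pi.single j 1, rfl⟩
  refine ⟨(of c)ᵀ, ext fun i j => ?_⟩
  simpa [mulVec, dotProduct, mul_apply, Pi.single_apply] using congrFun (hc j) i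

theorem re_star_dotProduct_map_ofReal_mulVec {ι : Type*} [Fintype ι] (S : Matrix ι ι ℝ)
    (v : ι → ℂ) :
    (star v ⬝ᵥ S.map (algebraMap ℝ ℂ) *ᵥ v).re
      = (fun i => (v i).re) ⬝ᵥ S *ᵥ (fun i => (v i).re)
        + (fun i => (v i).im) ⬝ᵥ S *ᵥ (fun i => (v i).im) := by
  simp only [dotProduct, mulVec, Complex.re_sum, Finset.mul_sum, ← Finset.sum_add_distrib,
    Pi.star_apply, map_apply, Complex.mul_re, Complex.mul_im, Complex.coe_algebraMap,
    Complex.ofReal_re, Complex.ofReal_im, Complex.star_def, Complex.conj_re, Complex.conj_im]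
  refine Finset.sum_congr rfl fun i _ => Finset.sum_congr rfl fun j _ => ?_
  ring

theorem PosSemidef.map_ofReal {ι : Type*} [Fintype ι] {S : Matrix ι ι ℝ} (hS : S.PosSemidef) :
    (S.map (algebraMap ℝ ℂ)).PosSemidef := by
  have hH : (S.map (algebraMap ℝ ℂ)).IsHermitian := hS.isHermitian.map _ fun x => by simp
  refine PosSemidef.of_dotProduct_mulVec_nonneg hH fun v => RCLike.nonneg_iff.2 ⟨?_, ?_⟩
  · have hre := hS.dotProduct_mulVec_nonneg (fun i => (v i).re)
    have him := hS.dotProduct_mulVec_nonneg (fun i => (v i).im)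
    simp only [star_trivial] at hre him
    rw [RCLike.re_to_complex, re_star_dotProduct_map_ofReal_mulVec]
    positivity
  · exact hH.im_star_dotProduct_mulVec_self v

theorem conjTranspose_map_ofReal {ι κ : Type*} (M : Matrix ι κ ℝ) :
    (M.map (algebraMap ℝ ℂ))ᴴ = Mᵀ.map (algebraMap ℝ ℂ) := by
  ext; simp

theorem vecMul_eq_zero_of_lyapunov {𝕜 ι κ : Type*} [RCLike 𝕜] [Fintype ι] [Fintype κ]
    {F S : Matrix ι ι 𝕜} {C : Matrix ι κ 𝕜} (hS : S.PosSemidef)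
    (hL : F * S + S * Fᴴ + C * Cᴴ = 0) {u : ι → 𝕜} {μ : 𝕜} (hu : u ᵥ* F = μ • u)
    (hμ : 0 ≤ RCLike.re μ) : u ᵥ* C = 0 := by
  have hFu : Fᴴ *ᵥ star u = star μ • star u := by rw [← star_vecMul, hu, star_smul]
  have hsandwich : (μ + star μ) * (u ⬝ᵥ S *ᵥ star u) + (u ᵥ* C) ⬝ᵥ star (u ᵥ* C) = 0 := by
    have hFS : u ⬝ᵥ (F * S) *ᵥ star u = μ * (u ⬝ᵥ S *ᵥ star u) := by
      rw [← mulVec_mulVec, dotProduct_mulVec, hu, smul_dotProduct, smul_eq_mul]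
    have hSF : u ⬝ᵥ (S * Fᴴ) *ᵥ star u = star μ * (u ⬝ᵥ S *ᵥ star u) := by
      rw [← mulVec_mulVec, hFu, mulVec_smul, dotProduct_smul, smul_eq_mul]
    have hCC : u ⬝ᵥ (C * Cᴴ) *ᵥ star u = (u ᵥ* C) ⬝ᵥ star (u ᵥ* C) := by
      rw [← mulVec_mulVec, dotProduct_mulVec, star_vecMul]
    have h := congrArg (fun M => u ⬝ᵥ M *ᵥ star u) hL
    simp only [add_mulVec, dotProduct_add, hFS, hSF, hCC, zero_mulVec, dotProduct_zero] at h
    rw [add_mul, h]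
  have hs : 0 ≤ u ⬝ᵥ S *ᵥ star u := by simpa using hS.dotProduct_mulVec_nonneg (star u)
  have hμ' : 0 ≤ μ + star μ := by
    rw [RCLike.star_def, RCLike.add_conj]
    exact mul_nonneg zero_le_two (RCLike.ofReal_nonneg.2 hμ)
  have hw : 0 ≤ (u ᵥ* C) ⬝ᵥ star (u ᵥ* C) := by
    rw [dotProduct_comm]; exact dotProduct_star_self_nonneg _
  rw [← dotProduct_star_self_eq_zero, dotProduct_comm]
  exact ((add_eq_zero_iff_of_nonneg (mul_nonneg hμ' hs) hw).1 hsandwich).2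

end Matrix

theorem closedLoop_lyapunov_eq {R ι κ : Type*} [CommRing R] [Fintype ι] [DecidableEq ι]
    [Fintype κ] (A S : Matrix ι ι R) (B X : Matrix ι κ R) (hS : S.IsSymm) (hSdet : IsUnit S.det) :
    (A - B * (-Xᵀ * S⁻¹)) * S + S * (A - B * (-Xᵀ * S⁻¹))ᵀ
      = A * S + S * Aᵀ + B * Xᵀ + X * Bᵀ := by
  simp only [sub_mul, mul_sub, Matrix.neg_mul, Matrix.mul_neg, transpose_sub, transpose_mul,
    transpose_neg, transpose_transpose, transpose_nonsing_inv, hS.eq, Matrix.mul_assoc,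
    nonsing_inv_mul S hSdet, Matrix.mul_one, ← Matrix.mul_assoc S, mul_nonsing_inv S hSdet,
    Matrix.one_mul]
  abel

theorem IsControllablePair.eq_zero_of_vecMul_eq_zero {n m : ℕ} {A : Matrix (Fin n) (Fin n) ℝ}
    {B : Matrix (Fin n) (Fin m) ℝ} (hAB : IsControllablePair A B) {u : Fin n → ℂ} {μ : ℂ}
    (hA : u ᵥ* A.map (algebraMap ℝ ℂ) = μ • u) (hB : u ᵥ* B.map (algebraMap ℝ ℂ) = 0) :
    u = 0 := by
  have hpow (k : ℕ) : u ᵥ* (A ^ k).map (algebraMap ℝ ℂ) = μ ^ k • u := by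
    rw [← RingHom.mapMatrix_apply, map_pow, RingHom.mapMatrix_apply]
    induction k with
    | zero => simp
    | succ k ih => rw [pow_succ, ← vecMul_vecMul, ih, smul_vecMul, hA, smul_smul, pow_succ]
  have hctrb : u ᵥ* (ctrbMatrix A B).map (algebraMap ℝ ℂ) = 0 := by
    funext ⟨k, j⟩
    have hk : u ᵥ* (A ^ (k : ℕ) * B).map (algebraMap ℝ ℂ) = 0 := by
      rw [Matrix.map_mul, ← vecMul_vecMul, hpow, smul_vecMul, hB, smul_zero]
    simpa [ctrbMatrix, vecMul, dotProduct] using congrFun hk j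
  obtain ⟨R, hR⟩ := exists_mul_eq_one_of_rank_eq_card (hAB.trans (Fintype.card_fin n).symm)
  calc u = u ᵥ* (ctrbMatrix A B * R).map (algebraMap ℝ ℂ) := by simp [hR]
    _ = 0 := by rw [Matrix.map_mul, ← vecMul_vecMul, hctrb, zero_vecMul]

/-- under controllability of `(A,B)` and `range B ⊆ range B₁`,
if `X` solves `AΣ + ΣAᵀ + B₁B₁ᵀ + BXᵀ + XBᵀ = 0` with `Σ ≻ 0`, then
`K := −XᵀΣ⁻¹` is stabilizing and maintains `Σ`. -/
theorem stmt8 {n m p : ℕ} (A : Matrix (Fin n) (Fin n) ℝ) (B : Matrix (Fin n) (Fin m) ℝ)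
    (B₁ : Matrix (Fin n) (Fin p) ℝ)
    (hAB : IsControllablePair A B)
    (hBB₁ : Set.range B.mulVec ⊆ Set.range B₁.mulVec)
    (S : Matrix (Fin n) (Fin n) ℝ) (hS : S.PosDef)
    (X : Matrix (Fin n) (Fin m) ℝ)
    (hX : A * S + S * Aᵀ + B₁ * B₁ᵀ + B * Xᵀ + X * Bᵀ = 0) :
    IsHurwitz (A - B * (-Xᵀ * S⁻¹)) ∧
    (A - B * (-Xᵀ * S⁻¹)) * S + S * (A - B * (-Xᵀ * S⁻¹))ᵀ + B₁ * B₁ᵀ = 0 := by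
  set F := A - B * (-Xᵀ * S⁻¹) with hF
  have hL : F * S + S * Fᵀ + B₁ * B₁ᵀ = 0 := by
    rw [closedLoop_lyapunov_eq A S B X (isHermitian_iff_isSymm.1 hS.isHermitian)
      (isUnit_iff_ne_zero.2 hS.det_pos.ne'), ← hX]
    abel
  refine ⟨fun μ hμ => ?_, hL⟩
  by_contra! hμ0
  obtain ⟨u, hu0, hu⟩ := exists_vecMul_eq_smul_of_mem_spectrum hμ
  have hLc : F.map (algebraMap ℝ ℂ) * S.map (algebraMap ℝ ℂ)
      + S.map (algebraMap ℝ ℂ) * (F.map (algebraMap ℝ ℂ))ᴴ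
      + B₁.map (algebraMap ℝ ℂ) * (B₁.map (algebraMap ℝ ℂ))ᴴ = 0 := by
    simpa [conjTranspose_map_ofReal, Matrix.map_mul, Matrix.map_add, -Complex.coe_algebraMap] using
      congrArg (·.map (algebraMap ℝ ℂ)) hL
  have huB₁ := vecMul_eq_zero_of_lyapunov hS.posSemidef.map_ofReal hLc hu hμ0
  obtain ⟨C, hC⟩ := exists_mul_eq_of_range_mulVec_subset hBB₁
  have huB : u ᵥ* B.map (algebraMap ℝ ℂ) = 0 := by
    rw [← hC, Matrix.map_mul, ← vecMul_vecMul, huB₁, zero_vecMul]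
  have huA : u ᵥ* A.map (algebraMap ℝ ℂ) = μ • u := by
    rwa [hF, Matrix.map_sub _ (map_sub _), Matrix.map_mul, vecMul_sub, ← vecMul_vecMul, huB,
      zero_vecMul, sub_zero] at hu
  exact hu0 (hAB.eq_zero_of_vecMul_eq_zero huA huB)
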